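/- Fix R = 2/3, ε₁ ∈ (0, 1/2) and m ≥ 0. There exists a constant C > 0 such that for all ρ ∈ [1/2, 2], all u ∈ ℝ³ with |u| ≤ 1 and all θ ∈ [1, 3 − 4ε₁], the integral ∫_{ℝ³} (1 + |v|²)^m · M_{[ρ,u,θ]}(v)^{2(1 − ε₁)} · μ(v)^{−1} dv is finite and bounded by C. -/

import Mathlib

/-!
Up to a prefactor bounded uniformly in `ρ` and `θ`, `M_{[ρ,u,θ]}^p / μ` with `p = 2(1 - ε₁)` is
`exp (-(p / (2Rθ)) |v - u|² + |v|² / 2)`. For `θ ≤ 3 - 4ε₁` the rate `p / (2Rθ)` exceeds `1/2` by a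
fixed `δ > 0`, so for `|u| ≤ 1` the exponent is at most a constant minus `(δ/2)|v|²`. The weight
`(1 + |v|²)^m` costs at most a factor `K exp ((δ/4)|v|²)`, and what remains is a fixed Gaussian
dominating the integrand for all admissible `ρ, u, θ`.
-/

open MeasureTheory

/-- The local Maxwellian `M_{[ρ,u,θ]}(v) = ρ (2πRθ)^{−3/2} exp(−|v−u|²/(2Rθ))`. -/
noncomputable def localMaxwellian (R ρ θ : ℝ) (u v : EuclideanSpace ℝ (Fin 3)) : ℝ :=
  ρ * (2 * Real.pi * R * θ) ^ (-(3 : ℝ) / 2) * Real.exp (-‖v - u‖ ^ 2 / (2 * R * θ))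

/-- The global Maxwellian `μ(v) = (2π)^{−3/2} exp(−|v|²/2) = M_{[1,0,3/2]}` (R = 2/3). -/
noncomputable def globalMaxwellian (v : EuclideanSpace ℝ (Fin 3)) : ℝ :=
  (2 * Real.pi) ^ (-(3 : ℝ) / 2) * Real.exp (-‖v‖ ^ 2 / 2)

open Real

section Gaussian

variable {V : Type*} [NormedAddCommGroup V] [InnerProductSpace ℝ V] [FiniteDimensional ℝ V]
  [MeasurableSpace V] [BorelSpace V]

theorem integrable_rexp_neg_mul_sq_norm {b : ℝ} (hb : 0 < b) :
    Integrable fun v : V => rexp (-b * ‖v‖ ^ 2) :=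
  .of_integral_ne_zero <| by
    rw [GaussianFourier.integral_rexp_neg_mul_sq_norm hb]
    positivity

theorem integrable_and_integral_le_of_le_gaussian {f : V → ℝ} {c b : ℝ} (hb : 0 < b)
    (hf : AEStronglyMeasurable f) (hf0 : ∀ v, 0 ≤ f v)
    (hle : ∀ v, f v ≤ c * rexp (-b * ‖v‖ ^ 2)) :
    Integrable f ∧ ∫ v, f v ≤ c * (π / b) ^ (Module.finrank ℝ V / 2 : ℝ) := by
  have hg := (integrable_rexp_neg_mul_sq_norm (V := V) hb).const_mul c
  have hfi : Integrable f :=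
    hg.mono' hf (.of_forall fun v => (abs_of_nonneg (hf0 v)).trans_le (hle v))
  refine ⟨hfi, ?_⟩
  calc ∫ v, f v ≤ ∫ v, c * rexp (-b * ‖v‖ ^ 2) := integral_mono hfi hg hle
    _ = c * (π / b) ^ (Module.finrank ℝ V / 2 : ℝ) := by
      rw [integral_const_mul, GaussianFourier.integral_rexp_neg_mul_sq_norm hb]

end Gaussian

theorem exists_one_add_rpow_le_mul_exp {m η : ℝ} (hm : 0 ≤ m) (hη : 0 < η) :
    ∃ K > 0, ∀ t, 0 ≤ t → (1 + t) ^ m ≤ K * rexp (η * t) := by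
  set ε := η / (m + 1)
  have hε : 0 < ε := by positivity
  have hεm : ε * m ≤ η := by
    rw [div_mul_eq_mul_div, div_le_iff₀ (by positivity)]
    nlinarith
  refine ⟨(1 + ε⁻¹) ^ m, by positivity, fun t ht => ?_⟩
  have hlin : 1 + t ≤ (1 + ε⁻¹) * rexp (ε * t) :=
    calc 1 + t ≤ (1 + ε⁻¹) * (ε * t + 1) := by
          field_simp
          nlinarith [mul_nonneg hε.le ht, mul_nonneg (mul_nonneg hε.le hε.le) ht]
      _ ≤ (1 + ε⁻¹) * rexp (ε * t) := by gcongr; exact add_one_le_exp _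
  calc (1 + t) ^ m ≤ ((1 + ε⁻¹) * rexp (ε * t)) ^ m := by gcongr
    _ = (1 + ε⁻¹) ^ m * rexp (ε * m * t) := by
      rw [mul_rpow (by positivity) (exp_pos _).le, ← exp_mul, mul_right_comm]
    _ ≤ (1 + ε⁻¹) ^ m * rexp (η * t) := by gcongr

theorem neg_mul_norm_sub_sq_add_half_norm_sq_le {E : Type*} [SeminormedAddCommGroup E]
    {u v : E} {a δ r : ℝ} (hδ : 0 < δ) (ha : 1 / 2 + δ ≤ a) (hu : ‖u‖ ≤ r) :
    -(a * ‖v - u‖ ^ 2) + ‖v‖ ^ 2 / 2 ≤ ((1 + 2 * δ) * r) ^ 2 / (2 * δ) - δ / 2 * ‖v‖ ^ 2 := by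
  set x := ‖v‖
  set y := ‖v - u‖
  have hy : x - r ≤ y := by linarith [norm_sub_norm_le v u]
  have hy2 : x ^ 2 - 2 * r * x ≤ y ^ 2 := by
    have hx : 0 ≤ x := norm_nonneg v
    rcases le_total r x with hrx | hxr
    · nlinarith [pow_le_pow_left₀ (sub_nonneg.2 hrx) hy 2, sq_nonneg r]
    · nlinarith [norm_nonneg u, sq_nonneg y]
  have hay : (1 / 2 + δ) * y ^ 2 ≤ a * y ^ 2 := by gcongr
  -- AM-GM on the cross term `(1 + 2δ) r x`
  have hamgm : (1 + 2 * δ) * r * x ≤ δ / 2 * x ^ 2 + ((1 + 2 * δ) * r) ^ 2 / (2 * δ) := by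
    have : 0 ≤ (δ * x - (1 + 2 * δ) * r) ^ 2 / (2 * δ) := by positivity
    have e : (δ * x - (1 + 2 * δ) * r) ^ 2 / (2 * δ) = δ / 2 * x ^ 2 +
        ((1 + 2 * δ) * r) ^ 2 / (2 * δ) - (1 + 2 * δ) * r * x := by
      field_simp; ring
    linarith
  nlinarith

section Maxwellian

variable {R ρ θ : ℝ} {u : EuclideanSpace ℝ (Fin 3)}

theorem localMaxwellian_nonneg (hR : 0 ≤ R) (hρ : 0 ≤ ρ) (hθ : 0 ≤ θ)
    (v : EuclideanSpace ℝ (Fin 3)) : 0 ≤ localMaxwellian R ρ θ u v := by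
  unfold localMaxwellian
  positivity

theorem globalMaxwellian_pos (v : EuclideanSpace ℝ (Fin 3)) : 0 < globalMaxwellian v := by
  unfold globalMaxwellian
  positivity

theorem localMaxwellian_rpow_div_globalMaxwellian (hR : 0 ≤ R) (hρ : 0 ≤ ρ) (hθ : 0 ≤ θ)
    (p : ℝ) (v : EuclideanSpace ℝ (Fin 3)) :
    localMaxwellian R ρ θ u v ^ p / globalMaxwellian v =
      (ρ * (2 * π * R * θ) ^ (-(3 : ℝ) / 2)) ^ p * (2 * π) ^ ((3 : ℝ) / 2) *
        rexp (-(p / (2 * R * θ) * ‖v - u‖ ^ 2) + ‖v‖ ^ 2 / 2) := by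
  rw [localMaxwellian, globalMaxwellian, mul_rpow (by positivity) (exp_pos _).le, ← exp_mul,
    div_eq_mul_inv, mul_inv, ← rpow_neg (by positivity), ← exp_neg, exp_add]
  ring_nf

theorem localMaxwellian_rpow_div_globalMaxwellian_nonneg (hR : 0 ≤ R) (hρ : 0 ≤ ρ)
    (hθ : 0 ≤ θ) (p : ℝ) (v : EuclideanSpace ℝ (Fin 3)) :
    0 ≤ localMaxwellian R ρ θ u v ^ p / globalMaxwellian v :=
  div_nonneg (rpow_nonneg (localMaxwellian_nonneg hR hρ hθ v) p) (globalMaxwellian_pos v).le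

theorem localMaxwellian_rpow_div_globalMaxwellian_le {ρ₀ θ₀ p δ r : ℝ} (hR : 0 < R)
    (hρ : 0 ≤ ρ) (hρ₀ : ρ ≤ ρ₀) (hθ₀ : 0 < θ₀) (hθ : θ₀ ≤ θ) (hp : 0 ≤ p) (hδ : 0 < δ)
    (hdecay : 1 / 2 + δ ≤ p / (2 * R * θ)) (hu : ‖u‖ ≤ r) (v : EuclideanSpace ℝ (Fin 3)) :
    localMaxwellian R ρ θ u v ^ p / globalMaxwellian v ≤
      (ρ₀ * (2 * π * R * θ₀) ^ (-(3 : ℝ) / 2)) ^ p * (2 * π) ^ ((3 : ℝ) / 2) *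
        rexp (((1 + 2 * δ) * r) ^ 2 / (2 * δ)) * rexp (-(δ / 2) * ‖v‖ ^ 2) := by
  have hθ0 : 0 < θ := hθ₀.trans_le hθ
  have hprefactor : ρ * (2 * π * R * θ) ^ (-(3 : ℝ) / 2) ≤ ρ₀ * (2 * π * R * θ₀) ^ (-(3 : ℝ) / 2) :=
    mul_le_mul hρ₀ (rpow_le_rpow_of_nonpos (by positivity) (by gcongr) (by norm_num))
      (by positivity) (hρ.trans hρ₀)
  have hexponent := neg_mul_norm_sub_sq_add_half_norm_sq_le (v := v) hδ hdecay hu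
  rw [localMaxwellian_rpow_div_globalMaxwellian hR.le hρ hθ0.le, mul_assoc _ (rexp _), ← exp_add]
  gcongr (?_ : ℝ) ^ p * _ * rexp ?_
  · have := hρ.trans hρ₀
    positivity
  · linarith

end Maxwellian

/-- Uniform weighted integrability of `M^{2(1−ε₁)}/μ`: with `R = 2/3`, for
`ε₁ ∈ (0,1/2)` and `m ≥ 0` there is `C > 0` such that for all `ρ ∈ [1/2,2]`,
`|u| ≤ 1`, `θ ∈ [1, 3−4ε₁]`, the integral
`∫ (1+|v|²)^m M_{[ρ,u,θ]}(v)^{2(1−ε₁)} μ(v)⁻¹ dv` is finite and `≤ C`. -/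
theorem maxwellian_power_weighted_integrable
    (ε₁ m : ℝ) (hε0 : 0 < ε₁) (hε : ε₁ < 1 / 2) (hm : 0 ≤ m) :
    ∃ C : ℝ, 0 < C ∧
      ∀ (ρ θ : ℝ) (u : EuclideanSpace ℝ (Fin 3)),
        ρ ∈ Set.Icc (1 / 2 : ℝ) 2 → ‖u‖ ≤ 1 → θ ∈ Set.Icc (1 : ℝ) (3 - 4 * ε₁) →
        Integrable (fun v : EuclideanSpace ℝ (Fin 3) =>
          (1 + ‖v‖ ^ 2) ^ m * localMaxwellian (2 / 3) ρ θ u v ^ (2 * (1 - ε₁))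
            / globalMaxwellian v) ∧
        (∫ v : EuclideanSpace ℝ (Fin 3),
            (1 + ‖v‖ ^ 2) ^ m * localMaxwellian (2 / 3) ρ θ u v ^ (2 * (1 - ε₁))
              / globalMaxwellian v)
          ≤ C := by
  set p := 2 * (1 - ε₁)
  have hε3 : 0 < 3 - 4 * ε₁ := by linarith
  -- the excess of the decay rate `p / (2Rθ)` of `M ^ p` over the rate `1/2` of `μ⁻¹`,
  -- attained at `θ = 3 - 4ε₁`
  set δ := ε₁ / (2 * (3 - 4 * ε₁))
  have hδ : 0 < δ := by positivity
  obtain ⟨K, hK, hweight⟩ := exists_one_add_rpow_le_mul_exp hm (by positivity : 0 < δ / 4)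
  set A := (2 * (2 * π * (2 / 3) * 1) ^ (-(3 : ℝ) / 2)) ^ p * (2 * π) ^ ((3 : ℝ) / 2) *
    rexp (((1 + 2 * δ) * 1) ^ 2 / (2 * δ))
  refine ⟨K * A * (π / (δ / 4)) ^ ((3 : ℝ) / 2), by positivity, ?_⟩
  rintro ρ θ u ⟨hρ, hρ'⟩ hu ⟨hθ, hθ'⟩
  have hdecay : 1 / 2 + δ ≤ p / (2 * (2 / 3) * θ) :=
    calc 1 / 2 + δ = p / (2 * (2 / 3) * (3 - 4 * ε₁)) := by
          rw [div_add_div _ _ two_ne_zero (by positivity),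
            div_eq_div_iff (by positivity) (by positivity)]
          ring
      _ ≤ p / (2 * (2 / 3) * θ) := by gcongr; linarith
  have hmeas : Measurable fun v => (1 + ‖v‖ ^ 2) ^ m * localMaxwellian (2 / 3) ρ θ u v ^ p /
      globalMaxwellian v := by
    unfold localMaxwellian globalMaxwellian
    fun_prop
  simp_rw [mul_div_assoc] at hmeas ⊢
  simpa only [finrank_euclideanSpace_fin, Nat.cast_ofNat] using
    integrable_and_integral_le_of_le_gaussian (by positivity : 0 < δ / 4)
      hmeas.aestronglyMeasurable
      (fun v => mul_nonneg (by positivity) (localMaxwellian_rpow_div_globalMaxwellian_nonneg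
        (by norm_num) (by linarith) (by linarith) p v))
      fun v => calc
        _ ≤ K * rexp (δ / 4 * ‖v‖ ^ 2) * (A * rexp (-(δ / 2) * ‖v‖ ^ 2)) :=
          mul_le_mul (hweight _ (by positivity))
            (localMaxwellian_rpow_div_globalMaxwellian_le (by norm_num) (by linarith) hρ'
              one_pos hθ (by linarith) hδ hdecay hu v)
            (localMaxwellian_rpow_div_globalMaxwellian_nonneg (by norm_num) (by linarith)
              (by linarith) p v) (by positivity)
        _ = K * A * rexp (-(δ / 4) * ‖v‖ ^ 2) := by
          rw [mul_mul_mul_comm, ← exp_add]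
          ring_nf
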